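/- Let n ≥ 2, let M = [m_{ij}] be an n×n real B-Nekrasov matrix with decomposition M = B⁺ + C, where B⁺ = [b_{ij}], let q ∈ ℝⁿ, and let x* be a solution of LCP(M,q). Then for every x ∈ ℝⁿ, ‖x − x*‖_∞ ≤ (max_{1 ≤ i ≤ n} (n − 1) η_i(B⁺)/min{b_{ii} − h_i(B⁺), 1}) · ‖r(x)‖_∞. -/

import Mathlib

open Finset

noncomputable def nekH {n : ℕ} {𝕜 : Type*} [RCLike 𝕜] (A : Matrix (Fin n) (Fin n) 𝕜) : Fin n → ℝ
  | i =>
    (∑ j : Fin n, if h : j < i then ‖A i j‖ / ‖A j j‖ * nekH A j else 0)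
      + ∑ j : Fin n, if i < j then ‖A i j‖ else 0
termination_by i => i.val
decreasing_by exact h

def IsNekrasov {n : ℕ} {𝕜 : Type*} [RCLike 𝕜] (A : Matrix (Fin n) (Fin n) 𝕜) : Prop :=
  ∀ i, nekH A i < ‖A i i‖

noncomputable def nekZ {n : ℕ} {𝕜 : Type*} [RCLike 𝕜] (A : Matrix (Fin n) (Fin n) 𝕜) : Fin n → ℝ
  | i => (∑ j : Fin n, if h : j < i then ‖A i j‖ / ‖A j j‖ * nekZ A j else 0) + 1
termination_by i => i.val
decreasing_by exact h

noncomputable def nekEta {n : ℕ} {𝕜 : Type*} [RCLike 𝕜] (M : Matrix (Fin n) (Fin n) 𝕜) : Fin n → ℝ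
  | i => (∑ j : Fin n, if h : j < i then ‖M i j‖ / min ‖M j j‖ 1 * nekEta M j else 0) + 1
termination_by i => i.val
decreasing_by exact h

noncomputable def linftyNorm {n : ℕ} {𝕜 : Type*} [RCLike 𝕜] (A : Matrix (Fin n) (Fin n) 𝕜) : ℝ :=
  ⨆ i, ∑ j, ‖A i j‖

noncomputable def rPlus {n : ℕ} (M : Matrix (Fin n) (Fin n) ℝ) (i : Fin n) : ℝ :=
  Finset.fold max 0 (fun j => M i j) (Finset.univ.erase i)

noncomputable def BPlus {n : ℕ} (M : Matrix (Fin n) (Fin n) ℝ) : Matrix (Fin n) (Fin n) ℝ :=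
  Matrix.of fun i j => M i j - rPlus M i

def IsBNekrasov {n : ℕ} (M : Matrix (Fin n) (Fin n) ℝ) : Prop :=
  IsNekrasov (BPlus M) ∧ ∀ i, 0 < BPlus M i i

def IsLCPSolution {n : ℕ} (M : Matrix (Fin n) (Fin n) ℝ) (q x : Fin n → ℝ) : Prop :=
  (∀ i, 0 ≤ x i) ∧ (∀ i, 0 ≤ (M.mulVec x + q) i) ∧ ∑ i, (M.mulVec x + q) i * x i = 0

def IsPMatrix {n : ℕ} (M : Matrix (Fin n) (Fin n) ℝ) : Prop :=
  ∀ S : Finset (Fin n), 0 < (M.submatrix (fun i : S => (i : Fin n)) (fun j : S => (j : Fin n))).det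


/-!
Since `x*` solves the LCP, `r(x*) = 0`, and `min a b - min c d` is a convex combination of
`a - c` and `b - d`; hence `r(x) = (I - D + D M) (x - x*)` for a diagonal `D` with entries in
`[0, 1]`. Write `M = B⁺ + r⁺ 𝟙ᵀ`. The Z-matrix `A = I - D + D B⁺` is again Nekrasov, with
`h_i(A) ≤ d_i h_i(B⁺)` and `z_i(A) ≤ η_i(B⁺)`, and the Nekrasov recursion yields weights
`0 < w ≤ 1` with `∑_{j ≠ i} |a_ij| w_j + β ≤ a_ii w_i`. This gives `‖v‖ ≤ β⁻¹ ‖A v‖` and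
`A⁻¹ ≥ 0`. With `A u = D r⁺ ≥ 0`, the vector `W = y + (∑ y) u` satisfies `A W = r(x)`, and `y`
is recovered from `W` at the cost of a factor `n - 1`.
-/

open Matrix

lemma Fin.sum_erase_eq_sum_Iio_add_sum_Ioi {n : ℕ} {α : Type*} [AddCommMonoid α] (f : Fin n → α)
    (i : Fin n) : ∑ j ∈ univ.erase i, f j = ∑ j ∈ Iio i, f j + ∑ j ∈ Ioi i, f j := by
  rw [← sum_filter_add_sum_filter_not _ (· < i)]
  congr 1 <;> apply sum_congr _ (fun _ _ => rfl) <;> ext j <;> simp <;> omega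

section Nekrasov

variable {n : ℕ} (A : Matrix (Fin n) (Fin n) ℝ)

lemma nekH_eq (i : Fin n) :
    nekH A i = ∑ j ∈ Iio i, |A i j| / |A j j| * nekH A j + ∑ j ∈ Ioi i, |A i j| := by
  rw [nekH]
  simp only [Real.norm_eq_abs, dite_eq_ite, ← sum_filter, filter_gt_eq_Iio, filter_lt_eq_Ioi]

lemma nekZ_eq (i : Fin n) :
    nekZ A i = ∑ j ∈ Iio i, |A i j| / |A j j| * nekZ A j + 1 := by
  rw [nekZ]
  simp only [Real.norm_eq_abs, dite_eq_ite, ← sum_filter, filter_gt_eq_Iio]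

lemma nekEta_eq (i : Fin n) :
    nekEta A i = ∑ j ∈ Iio i, |A i j| / min |A j j| 1 * nekEta A j + 1 := by
  rw [nekEta]
  simp only [Real.norm_eq_abs, dite_eq_ite, ← sum_filter, filter_gt_eq_Iio]

lemma nekH_nonneg (i : Fin n) : 0 ≤ nekH A i := by
  induction i using WellFoundedLT.induction with
  | _ i ih =>
    rw [nekH_eq]
    exact add_nonneg (sum_nonneg fun j hj => mul_nonneg (by positivity) (ih j (mem_Iio.1 hj)))
      (sum_nonneg fun _ _ => abs_nonneg _)

lemma one_le_nekZ (i : Fin n) : 1 ≤ nekZ A i := by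
  induction i using WellFoundedLT.induction with
  | _ i ih =>
    rw [nekZ_eq, le_add_iff_nonneg_left]
    exact sum_nonneg fun j hj =>
      mul_nonneg (by positivity) (zero_le_one.trans (ih j (mem_Iio.1 hj)))

lemma one_le_nekEta (i : Fin n) : 1 ≤ nekEta A i := by
  induction i using WellFoundedLT.induction with
  | _ i ih =>
    rw [nekEta_eq, le_add_iff_nonneg_left]
    exact sum_nonneg fun j hj =>
      mul_nonneg (by positivity) (zero_le_one.trans (ih j (mem_Iio.1 hj)))

-- The recursions for `nekH` and `nekZ` telescope against these weights.
noncomputable def nekrasovWeight (β : ℝ) (i : Fin n) : ℝ := (nekH A i + β * nekZ A i) / A i i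

variable {A} (hpos : ∀ i, 0 < A i i) {β : ℝ} (hβ : ∀ i, β * nekZ A i ≤ A i i - nekH A i)
include hpos

lemma nekrasovWeight_pos (hβ0 : 0 < β) (i : Fin n) : 0 < nekrasovWeight A β i :=
  div_pos (add_pos_of_nonneg_of_pos (nekH_nonneg A i)
    (mul_pos hβ0 (zero_lt_one.trans_le (one_le_nekZ A i)))) (hpos i)

include hβ

lemma nekrasovWeight_le_one (i : Fin n) : nekrasovWeight A β i ≤ 1 := by
  rw [nekrasovWeight, div_le_one (hpos i)]
  linarith [hβ i]

lemma nekrasovWeight_dominance (i : Fin n) :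
    ∑ j ∈ univ.erase i, |A i j| * nekrasovWeight A β j + β ≤ A i i * nekrasovWeight A β i := by
  have lower : ∑ j ∈ Iio i, |A i j| * nekrasovWeight A β j
      = ∑ j ∈ Iio i, |A i j| / |A j j| * nekH A j
        + β * ∑ j ∈ Iio i, |A i j| / |A j j| * nekZ A j := by
    rw [mul_sum, ← sum_add_distrib]
    refine sum_congr rfl fun j _ => ?_
    rw [nekrasovWeight, abs_of_pos (hpos j)]
    ring
  have upper : ∑ j ∈ Ioi i, |A i j| * nekrasovWeight A β j ≤ ∑ j ∈ Ioi i, |A i j| :=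
    sum_le_sum fun j _ => mul_le_of_le_one_right (abs_nonneg _) (nekrasovWeight_le_one hpos hβ j)
  have hdiag : A i i * nekrasovWeight A β i = nekH A i + β * nekZ A i :=
    mul_div_cancel₀ _ (hpos i).ne'
  rw [Fin.sum_erase_eq_sum_Iio_add_sum_Ioi, lower, hdiag, nekH_eq A i, nekZ_eq A i]
  linarith

end Nekrasov

lemma abs_le_of_abs_add_sum_mul_le {ι : Type*} [Fintype ι] [DecidableEq ι] {u y : ι → ℝ}
    (hu : 0 ≤ u) {Q : ℝ} (hW : ∀ j, |y j + (∑ i, y i) * u j| ≤ Q)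
    (hcard : 2 ≤ Fintype.card ι) (k : ι) : |y k| ≤ (Fintype.card ι - 1) * Q := by
  set σ := ∑ i, y i
  set s := ∑ i, u i
  set W := fun j => y j + σ * u j
  have hs : 0 ≤ s := sum_nonneg fun i _ => hu i
  have hQ : 0 ≤ Q := (abs_nonneg _).trans (hW k)
  have hcard' : (2 : ℝ) ≤ Fintype.card ι := by exact_mod_cast hcard
  set a := u k / (1 + s)
  have ha0 : 0 ≤ a := div_nonneg (hu k) (by positivity)
  have ha1 : a ≤ 1 := (div_le_one (by positivity)).2
    (by linarith [single_le_sum (fun i _ => hu i) (mem_univ k) (f := u)])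
  -- `∑ W = σ (1 + s)` expresses `σ` through `W`, so that `y k = W k - σ u k` only involves `W`.
  have hyk : y k = (1 - a) * W k - a * ∑ j ∈ univ.erase k, W j := by
    have hsum : ∑ j, W j = σ * (1 + s) := by
      simp only [W, sum_add_distrib, ← mul_sum]; ring
    rw [sum_erase_eq_sub (mem_univ k), hsum]
    simp only [W, a]
    field_simp
    ring
  have hrest : |∑ j ∈ univ.erase k, W j| ≤ (Fintype.card ι - 1) * Q := calc
    |∑ j ∈ univ.erase k, W j| ≤ ∑ j ∈ univ.erase k, Q :=
        (abs_sum_le_sum_abs _ _).trans (sum_le_sum fun j _ => hW j)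
    _ = (Fintype.card ι - 1) * Q := by
        rw [sum_const, card_erase_of_mem (mem_univ k), card_univ, nsmul_eq_mul,
          Nat.cast_sub (by omega), Nat.cast_one]
  calc |y k| ≤ (1 - a) * |W k| + a * |∑ j ∈ univ.erase k, W j| := by
        rw [hyk]
        refine (abs_sub _ _).trans_eq ?_
        rw [abs_mul, abs_mul, abs_of_nonneg (by linarith), abs_of_nonneg ha0]
    _ ≤ (1 - a) * Q + a * ((Fintype.card ι - 1) * Q) := by
        have : 0 ≤ 1 - a := by linarith
        gcongr
        exact hW k
    _ ≤ (Fintype.card ι - 1) * Q := by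
        nlinarith [mul_nonneg (mul_nonneg (sub_nonneg.2 ha1) (sub_nonneg.2 hcard')) hQ]

section WeightedDominance

variable {ι : Type*} [Fintype ι] [DecidableEq ι]

lemma Matrix.mulVec_eq_diag_add_sum_erase (A : Matrix ι ι ℝ) (y : ι → ℝ) (i : ι) :
    (A *ᵥ y) i = A i i * y i + ∑ j ∈ univ.erase i, A i j * y j := by
  rw [mulVec, dotProduct, ← add_sum_erase _ _ (mem_univ i)]

variable {A : Matrix ι ι ℝ} {w : ι → ℝ} {β : ℝ} (hβ : 0 < β) (hw : ∀ i, 0 < w i)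
  (hdom : ∀ i, ∑ j ∈ univ.erase i, |A i j| * w j + β ≤ A i i * w i)
include hβ hw hdom

lemma norm_le_of_weighted_dominance (hw1 : ∀ i, w i ≤ 1) (y : ι → ℝ) :
    ‖y‖ ≤ β⁻¹ * ‖A *ᵥ y‖ := by
  refine (pi_norm_le_iff_of_nonneg (by positivity)).2 fun k => ?_
  obtain ⟨i, -, hi⟩ := exists_max_image univ (fun j => |y j| / w j) ⟨k, mem_univ k⟩
  set s := |y i| / w i
  have hle : ∀ j, |y j| ≤ s * w j := fun j => (div_le_iff₀ (hw j)).1 (hi j (mem_univ j))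
  have hs : 0 ≤ s := div_nonneg (abs_nonneg _) (hw i).le
  have hyi : |y i| = s * w i := (div_mul_cancel₀ _ (hw i).ne').symm
  have hoff : ∑ j ∈ univ.erase i, |A i j * y j| ≤ s * (A i i * w i - β) := calc
    ∑ j ∈ univ.erase i, |A i j * y j| ≤ ∑ j ∈ univ.erase i, |A i j| * (s * w j) := by
        simp only [abs_mul]
        exact sum_le_sum fun j _ => mul_le_mul_of_nonneg_left (hle j) (abs_nonneg _)
    _ = s * ∑ j ∈ univ.erase i, |A i j| * w j := by
        rw [mul_sum]; exact sum_congr rfl fun j _ => by ring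
    _ ≤ s * (A i i * w i - β) :=
        mul_le_mul_of_nonneg_left (by linarith [hdom i]) hs
  have hrow : A i i * |y i| ≤ ‖A *ᵥ y‖ + s * (A i i * w i - β) := calc
    A i i * |y i| ≤ |A i i * y i| := by rw [abs_mul]; gcongr; exact le_abs_self _
    _ = |(A *ᵥ y) i - ∑ j ∈ univ.erase i, A i j * y j| := by
        rw [mulVec_eq_diag_add_sum_erase, add_sub_cancel_right]
    _ ≤ |(A *ᵥ y) i| + ∑ j ∈ univ.erase i, |A i j * y j| :=
        (abs_sub _ _).trans (by gcongr; exact abs_sum_le_sum_abs _ _)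
    _ ≤ ‖A *ᵥ y‖ + s * (A i i * w i - β) := add_le_add (norm_le_pi_norm (A *ᵥ y) i) hoff
  have hyk : |y k| ≤ s := (hle k).trans (mul_le_of_le_one_right hs (hw1 k))
  rw [hyi] at hrow
  rw [Real.norm_eq_abs, ← div_eq_inv_mul, le_div_iff₀ hβ]
  nlinarith

lemma nonneg_of_mulVec_nonneg (hZ : ∀ i j, i ≠ j → A i j ≤ 0) {u : ι → ℝ} (hu : 0 ≤ A *ᵥ u) :
    0 ≤ u := by
  by_contra hneg
  obtain ⟨k, hk⟩ : ∃ k, u k < 0 := by simpa [Pi.le_def] using hneg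
  obtain ⟨i, -, hi⟩ := exists_min_image univ (fun j => u j / w j) ⟨k, mem_univ k⟩
  set s := u i / w i
  have hs : s < 0 := (hi k (mem_univ k)).trans_lt (div_neg_of_neg_of_pos hk (hw k))
  have hle : ∀ j, s * w j ≤ u j := fun j => (le_div_iff₀ (hw j)).1 (hi j (mem_univ j))
  have hui : u i = s * w i := (div_mul_cancel₀ _ (hw i).ne').symm
  have hoff : ∑ j ∈ univ.erase i, A i j * u j ≤ s * -∑ j ∈ univ.erase i, |A i j| * w j := by
    rw [← sum_neg_distrib, mul_sum]
    refine sum_le_sum fun j hj => ?_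
    have hij := hZ i j (ne_of_mem_erase hj).symm
    rw [abs_of_nonpos hij]
    nlinarith [hle j]
  have := hu i
  rw [Pi.zero_apply, mulVec_eq_diag_add_sum_erase, hui] at this
  nlinarith [hdom i]


lemma exists_nonneg_mulVec_eq (hw1 : ∀ i, w i ≤ 1) (hZ : ∀ i j, i ≠ j → A i j ≤ 0) {t : ι → ℝ}
    (ht : 0 ≤ t) : ∃ u, 0 ≤ u ∧ A *ᵥ u = t := by
  have hinj : Function.Injective A.mulVec := fun a b hab => by
    have h := norm_le_of_weighted_dominance hβ hw hdom hw1 (a - b)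
    rw [mulVec_sub, hab, sub_self, norm_zero, mul_zero] at h
    exact sub_eq_zero.1 (norm_le_zero_iff.1 h)
  obtain ⟨u, hu⟩ := mulVec_surjective_iff_isUnit.2 (mulVec_injective_iff_isUnit.1 hinj) t
  exact ⟨u, nonneg_of_mulVec_nonneg hβ hw hdom hZ (hu ▸ ht), hu⟩

lemma norm_le_of_weighted_dominance_add_rankOne (hw1 : ∀ i, w i ≤ 1)
    (hZ : ∀ i j, i ≠ j → A i j ≤ 0) (hcard : 2 ≤ Fintype.card ι) {t : ι → ℝ}
    (ht : 0 ≤ t) (y : ι → ℝ) :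
    ‖y‖ ≤ (Fintype.card ι - 1) * β⁻¹ * ‖A *ᵥ y + (∑ j, y j) • t‖ := by
  obtain ⟨u, hu, hAu⟩ := exists_nonneg_mulVec_eq hβ hw hdom hw1 hZ ht
  -- `W = y + (∑ y) u` solves `A W = A y + (∑ y) t`, which the dominance bound controls.
  have hW := norm_le_of_weighted_dominance hβ hw hdom hw1 (y + (∑ j, y j) • u)
  rw [mulVec_add, mulVec_smul, hAu] at hW
  have hcard' : (1 : ℝ) ≤ Fintype.card ι - 1 := by
    have : (2 : ℝ) ≤ Fintype.card ι := by exact_mod_cast hcard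
    linarith
  refine (pi_norm_le_iff_of_nonneg (by positivity)).2 fun k => ?_
  rw [mul_assoc]
  exact abs_le_of_abs_add_sum_mul_le hu (fun j => (norm_le_pi_norm _ j).trans hW) hcard k

end WeightedDominance

section RowInterp

variable {ι : Type*} [Fintype ι] [DecidableEq ι]

def rowInterp (d : ι → ℝ) (B : Matrix ι ι ℝ) : Matrix ι ι ℝ := 1 - diagonal d + diagonal d * B

variable (d : ι → ℝ) (B : Matrix ι ι ℝ)

lemma rowInterp_apply_self (i : ι) : rowInterp d B i i = 1 - d i + d i * B i i := by
  simp [rowInterp]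

lemma rowInterp_apply_of_ne {i j : ι} (h : i ≠ j) : rowInterp d B i j = d i * B i j := by
  simp [rowInterp, h]

lemma rowInterp_mulVec_apply (y : ι → ℝ) (i : ι) :
    (rowInterp d B *ᵥ y) i = (1 - d i) * y i + d i * (B *ᵥ y) i := by
  simp only [rowInterp, add_mulVec, sub_mulVec, one_mulVec, ← mulVec_mulVec, mulVec_diagonal,
    Pi.add_apply, Pi.sub_apply]
  ring

lemma rowInterp_apply_nonpos_of_ne {d : ι → ℝ} {B : Matrix ι ι ℝ} (hd : 0 ≤ d)
    (hB : ∀ i j, i ≠ j → B i j ≤ 0) {i j : ι} (h : i ≠ j) : rowInterp d B i j ≤ 0 :=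
  (rowInterp_apply_of_ne d B h).trans_le (mul_nonpos_of_nonneg_of_nonpos (hd i) (hB i j h))

end RowInterp

section RowInterpNekrasov

variable {n : ℕ} {d : Fin n → ℝ} {B : Matrix (Fin n) (Fin n) ℝ}
  (hd : ∀ i, d i ∈ Set.Icc 0 1) (hpos : ∀ i, 0 < B i i)
include hd

lemma min_le_rowInterp_apply_self (i : Fin n) : min (B i i) 1 ≤ rowInterp d B i i := by
  obtain ⟨hd0, hd1⟩ := hd i
  rw [rowInterp_apply_self]
  nlinarith [min_le_left (B i i) 1, min_le_right (B i i) 1]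

include hpos

lemma nekH_rowInterp_le (i : Fin n) : nekH (rowInterp d B) i ≤ d i * nekH B i := by
  induction i using WellFoundedLT.induction with
  | _ i ih =>
    have hdi := (hd i).1
    have lower : ∀ j ∈ Iio i, |rowInterp d B i j| / |rowInterp d B j j| * nekH (rowInterp d B) j
        ≤ d i * (|B i j| / |B j j| * nekH B j) := fun j hj => by
      have hji : j < i := mem_Iio.1 hj
      have hδ : 0 < rowInterp d B j j := (lt_min (hpos j) one_pos).trans_le
        (min_le_rowInterp_apply_self hd j)
      -- `(I - D + D B)_jj` is a convex combination of `1` and `b_jj`.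
      have hratio : nekH (rowInterp d B) j / rowInterp d B j j ≤ nekH B j / B j j := by
        rw [div_le_div_iff₀ hδ (hpos j), rowInterp_apply_self]
        nlinarith [ih j hji, nekH_nonneg B j, (hd j).1, (hd j).2, hpos j]
      rw [rowInterp_apply_of_ne d B hji.ne', abs_mul, abs_of_nonneg hdi, abs_of_pos hδ,
        abs_of_pos (hpos j)]
      calc d i * |B i j| / rowInterp d B j j * nekH (rowInterp d B) j
          = d i * |B i j| * (nekH (rowInterp d B) j / rowInterp d B j j) := by ring
        _ ≤ d i * |B i j| * (nekH B j / B j j) := by gcongr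
        _ = d i * (|B i j| / B j j * nekH B j) := by ring
    have upper : ∀ j ∈ Ioi i, |rowInterp d B i j| = d i * |B i j| := fun j hj => by
      rw [rowInterp_apply_of_ne d B (mem_Ioi.1 hj).ne, abs_mul, abs_of_nonneg hdi]
    rw [nekH_eq, nekH_eq B, sum_congr rfl upper, mul_add, mul_sum, mul_sum]
    exact add_le_add (sum_le_sum lower) le_rfl

lemma nekZ_rowInterp_le_nekEta (i : Fin n) : nekZ (rowInterp d B) i ≤ nekEta B i := by
  induction i using WellFoundedLT.induction with
  | _ i ih =>
    rw [nekZ_eq, nekEta_eq]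
    refine add_le_add (sum_le_sum fun j hj => ?_) le_rfl
    have hji : j < i := mem_Iio.1 hj
    have hmin : 0 < min (B j j) 1 := lt_min (hpos j) one_pos
    have hδ := min_le_rowInterp_apply_self (B := B) hd j
    have hratio : nekZ (rowInterp d B) j / rowInterp d B j j ≤ nekEta B j / min (B j j) 1 :=
      div_le_div₀ (zero_le_one.trans (one_le_nekEta B j)) (ih j hji) hmin hδ
    have hratio0 : 0 ≤ nekZ (rowInterp d B) j / rowInterp d B j j :=
      div_nonneg (zero_le_one.trans (one_le_nekZ _ j)) (hmin.trans_le hδ).le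
    rw [rowInterp_apply_of_ne d B hji.ne', abs_mul, abs_of_nonneg (hd i).1,
      abs_of_pos (hmin.trans_le hδ), abs_of_pos (hpos j)]
    calc d i * |B i j| / rowInterp d B j j * nekZ (rowInterp d B) j
        = d i * |B i j| * (nekZ (rowInterp d B) j / rowInterp d B j j) := by ring
      _ ≤ 1 * |B i j| * (nekEta B j / min (B j j) 1) :=
          mul_le_mul (mul_le_mul_of_nonneg_right (hd i).2 (abs_nonneg _)) hratio hratio0
            (by positivity)
      _ = |B i j| / min (B j j) 1 * nekEta B j := by ring

lemma min_sub_nekH_le_rowInterp (i : Fin n) :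
    min (B i i - nekH B i) 1 ≤ rowInterp d B i i - nekH (rowInterp d B) i := by
  obtain ⟨hd0, hd1⟩ := hd i
  rw [rowInterp_apply_self]
  nlinarith [nekH_rowInterp_le hd hpos i, min_le_left (B i i - nekH B i) 1,
    min_le_right (B i i - nekH B i) 1]

lemma mul_nekZ_rowInterp_le {β : ℝ} (hβ0 : 0 ≤ β)
    (hβ : ∀ i, β * nekEta B i ≤ min (B i i - nekH B i) 1) (i : Fin n) :
    β * nekZ (rowInterp d B) i ≤ rowInterp d B i i - nekH (rowInterp d B) i := calc
  β * nekZ (rowInterp d B) i ≤ β * nekEta B i := by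
      gcongr; exact nekZ_rowInterp_le_nekEta hd hpos i
  _ ≤ min (B i i - nekH B i) 1 := hβ i
  _ ≤ rowInterp d B i i - nekH (rowInterp d B) i := min_sub_nekH_le_rowInterp hd hpos i

end RowInterpNekrasov

section BPlus

variable {n : ℕ} (M : Matrix (Fin n) (Fin n) ℝ)

lemma rPlus_nonneg (i : Fin n) : 0 ≤ rPlus M i :=
  (le_fold_max _).2 (Or.inl le_rfl)

lemma le_rPlus {i j : Fin n} (h : j ≠ i) : M i j ≤ rPlus M i :=
  (le_fold_max _).2 (Or.inr ⟨j, mem_erase.2 ⟨h, mem_univ j⟩, le_rfl⟩)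

lemma BPlus_apply_nonpos_of_ne {i j : Fin n} (h : i ≠ j) : BPlus M i j ≤ 0 :=
  sub_nonpos.2 (le_rPlus M h.symm)

lemma IsBNekrasov.nekH_lt {M : Matrix (Fin n) (Fin n) ℝ} (hM : IsBNekrasov M) (i : Fin n) :
    nekH (BPlus M) i < BPlus M i i := by
  simpa [Real.norm_eq_abs, abs_of_pos (hM.2 i)] using hM.1 i

lemma mulVec_eq_BPlus_mulVec_add (y : Fin n → ℝ) :
    M *ᵥ y = BPlus M *ᵥ y + (∑ j, y j) • rPlus M := by
  ext i
  simp only [mulVec, dotProduct, BPlus, of_apply, sub_mul, sum_sub_distrib, ← mul_sum,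
    Pi.add_apply, Pi.smul_apply, smul_eq_mul]
  ring

lemma rowInterp_mulVec_eq_BPlus (d y : Fin n → ℝ) :
    rowInterp d M *ᵥ y = rowInterp d (BPlus M) *ᵥ y + (∑ j, y j) • (d * rPlus M) := by
  ext i
  simp only [rowInterp_mulVec_apply, mulVec_eq_BPlus_mulVec_add M y, Pi.add_apply,
    Pi.smul_apply, Pi.mul_apply, smul_eq_mul]
  ring

end BPlus

theorem IsBNekrasov.norm_le {n : ℕ} (hn : 2 ≤ n) {M : Matrix (Fin n) (Fin n) ℝ}
    (hM : IsBNekrasov M) {d : Fin n → ℝ} (hd : ∀ i, d i ∈ Set.Icc 0 1) (y : Fin n → ℝ) :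
    ‖y‖ ≤ univ.sup' ⟨⟨0, Nat.zero_lt_of_lt hn⟩, mem_univ _⟩
        (fun i => (n - 1 : ℝ) * nekEta (BPlus M) i / min (BPlus M i i - nekH (BPlus M) i) 1) *
      ‖rowInterp d M *ᵥ y‖ := by
  set B := BPlus M
  set K := univ.sup' ⟨⟨0, Nat.zero_lt_of_lt hn⟩, mem_univ _⟩
    (fun i => (n - 1 : ℝ) * nekEta B i / min (B i i - nekH B i) 1)
  set A := rowInterp d B
  have hn1 : (0 : ℝ) < n - 1 := by
    have : (2 : ℝ) ≤ n := by exact_mod_cast hn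
    linarith
  have hgap : ∀ i, 0 < min (B i i - nekH B i) 1 := fun i =>
    lt_min (sub_pos.2 (hM.nekH_lt i)) one_pos
  have hK : ∀ i, (n - 1 : ℝ) * nekEta B i ≤ K * min (B i i - nekH B i) 1 := fun i =>
    (div_le_iff₀ (hgap i)).1 (le_sup' (fun i => (n - 1 : ℝ) * nekEta B i /
      min (B i i - nekH B i) 1) (mem_univ i))
  have hKpos : 0 < K := by
    let i₀ : Fin n := ⟨0, by omega⟩
    nlinarith [hK i₀, one_le_nekEta B i₀, hgap i₀]
  -- The margin `β = (n - 1) / K` is what makes the final constant `(n - 1) / β` equal `K`.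
  set β := (n - 1 : ℝ) / K
  have hβ : 0 < β := div_pos hn1 hKpos
  have hβA : ∀ i, β * nekZ A i ≤ A i i - nekH A i :=
    mul_nekZ_rowInterp_le hd hM.2 hβ.le fun i => by
      rw [div_mul_eq_mul_div, div_le_iff₀ hKpos, mul_comm _ K]; exact hK i
  have hApos : ∀ i, 0 < A i i := fun i =>
    (lt_min (hM.2 i) one_pos).trans_le (min_le_rowInterp_apply_self hd i)
  have hZ : ∀ i j, i ≠ j → A i j ≤ 0 := fun _ _ =>
    rowInterp_apply_nonpos_of_ne (fun i => (hd i).1) fun _ _ => BPlus_apply_nonpos_of_ne M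
  have hres : A *ᵥ y + (∑ j, y j) • (d * rPlus M) = rowInterp d M *ᵥ y :=
    (rowInterp_mulVec_eq_BPlus M d y).symm
  have key := norm_le_of_weighted_dominance_add_rankOne hβ (nekrasovWeight_pos hApos hβ)
    (nekrasovWeight_dominance hApos hβA) (nekrasovWeight_le_one hApos hβA) hZ
    (by simpa using hn) (t := d * rPlus M) (fun i => mul_nonneg (hd i).1 (rPlus_nonneg M i)) y
  rwa [hres, Fintype.card_fin, inv_div, mul_div_cancel₀ _ hn1.ne'] at key

lemma exists_mem_Icc_min_sub_min_eq (a b c d : ℝ) :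
    ∃ t ∈ Set.Icc (0 : ℝ) 1, min a b - min c d = (1 - t) * (a - c) + t * (b - d) := by
  have hm : min a b - min c d ∈ segment ℝ (a - c) (b - d) := by
    rw [segment_eq_uIcc, Set.uIcc, Set.mem_Icc]
    constructor <;> rcases le_total a b with h | h <;> rcases le_total c d with h' | h' <;>
      simp only [min_eq_left, min_eq_right, h, h', le_max_iff, min_le_iff] <;>
      first | (left; linarith) | (right; linarith)
  obtain ⟨s, t, hs, ht, hst, hsum⟩ := hm
  refine ⟨t, ⟨ht, by linarith⟩, ?_⟩
  rw [← hsum, ← hst, smul_eq_mul, smul_eq_mul]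
  ring

lemma IsLCPSolution.min_eq_zero {n : ℕ} {M : Matrix (Fin n) (Fin n) ℝ} {q x : Fin n → ℝ}
    (hx : IsLCPSolution M q x) (i : Fin n) : min (x i) ((M *ᵥ x + q) i) = 0 := by
  obtain ⟨hx0, hw0, hcompl⟩ := hx
  have := (sum_eq_zero_iff_of_nonneg fun j _ => mul_nonneg (hw0 j) (hx0 j)).1 hcompl i
    (mem_univ i)
  rcases mul_eq_zero.1 this with h | h
  · rw [h, min_eq_right (h ▸ hx0 i)]
  · rw [h, min_eq_left (h ▸ hw0 i)]

lemma IsLCPSolution.exists_natural_residual_eq {n : ℕ} {M : Matrix (Fin n) (Fin n) ℝ}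
    {q xstar : Fin n → ℝ} (hsol : IsLCPSolution M q xstar) (x : Fin n → ℝ) :
    ∃ d : Fin n → ℝ, (∀ i, d i ∈ Set.Icc 0 1) ∧
      (fun i => min (x i) ((M *ᵥ x + q) i)) = rowInterp d M *ᵥ (x - xstar) := by
  choose d hd hmin using fun i =>
    exists_mem_Icc_min_sub_min_eq (x i) ((M *ᵥ x + q) i) (xstar i) ((M *ᵥ xstar + q) i)
  refine ⟨d, hd, funext fun i => ?_⟩
  rw [rowInterp_mulVec_apply, ← sub_zero (min _ _), ← hsol.min_eq_zero i, hmin, mulVec_sub]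
  simp only [Pi.sub_apply, Pi.add_apply]
  ring

theorem stmt18 {n : ℕ} (hn : 2 ≤ n) (M : Matrix (Fin n) (Fin n) ℝ)
    (hBN : IsBNekrasov M)
    (q xstar : Fin n → ℝ) (hsol : IsLCPSolution M q xstar) (x : Fin n → ℝ) :
    ‖x - xstar‖ ≤
      (Finset.univ.sup' ⟨⟨0, by omega⟩, Finset.mem_univ _⟩
        (fun i => (n - 1 : ℝ) * nekEta (BPlus M) i /
          min (BPlus M i i - nekH (BPlus M) i) 1)) *
      ‖fun i => min (x i) ((M.mulVec x + q) i)‖ := by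
  obtain ⟨d, hd, hres⟩ := hsol.exists_natural_residual_eq x
  rw [hres]
  exact hBN.norm_le hn hd (x - xstar)
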